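/- Let G = (V, w) be a connected n-vertex weighted graph (λ(G) > 0). Then con-cert(G) equals the infimum over real τ with 0 < τ ≤ λ(G) of τ-cut-rank(G). -/

import Mathlib

/-!
A τ-cut-rank witness `X` (entrywise `X ≤ M_n`, `X w ≥ τ`) factors as `X = Y A` with `rank X`
rows in `A`. Fixing `A w'` fixes `X w'`, so every nonnegative `w'` with `A w' = A w` has each cut
at least `(X w')_S = (X w)_S ≥ τ > 0`: `A` certifies connectivity.

Conversely, if `A` certifies connectivity then for every shore `S` each nonnegative `w'` with
`A w' = A w` has positive `S`-cut, and LP duality (Farkas' lemma) gives `y_S` with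
`y_S A ≤ (M_n)_S` and `y_S · A w > 0`. Stacking these rows gives `X = Y A ≤ M_n` of rank at most
the number of rows of `A`, with `X w ≥ τ := min_S (X w)_S > 0`, and `τ ≤ λ(G)` because `X ≤ M_n`.

Farkas' lemma rests on finitely generated cones being closed, which follows from Carathéodory's
support reduction: a kernel direction lets one zero out a coordinate of a nonnegative preimage.
-/

open Finset Matrix

/-- The set of edge slots: 2-element subsets of the vertex set `Fin n`. -/
abbrev EdgeSlot (n : ℕ) := {e : Finset (Fin n) // e.card = 2}

/-- Weight of the cut with shore `S`: sum of weights of edge slots with exactly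
one endpoint in `S`. -/
noncomputable def cutWeight (n : ℕ) (w : EdgeSlot n → ℝ) (S : Finset (Fin n)) : ℝ :=
  ∑ e : EdgeSlot n, if (e.1 ∩ S).card = 1 then w e else 0

/-- `λ(G)`: the minimum cut weight over all shores `∅ ≠ S ⊊ V`. -/
noncomputable def minCutVal (n : ℕ) (w : EdgeSlot n → ℝ) : ℝ :=
  sInf {x : ℝ | ∃ S : Finset (Fin n), S.Nonempty ∧ S ≠ Finset.univ ∧ cutWeight n w S = x}

/-- The at-least-τ linear-query certificate complexity: the least `k` such that some
`k`-row query matrix `A` certifies that every nonnegative `w'` consistent with the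
answers on `w` has minimum cut value at least `τ`. -/
noncomputable def atLeastCert (n : ℕ) (τ : ℝ) (w : EdgeSlot n → ℝ) : ℕ :=
  sInf {k : ℕ | ∃ A : Matrix (Fin k) (EdgeSlot n) ℝ,
    ∀ w' : EdgeSlot n → ℝ, (∀ e, 0 ≤ w' e) → A.mulVec w = A.mulVec w' →
      τ ≤ minCutVal n w'}

/-- The minimum-cut linear-query certificate complexity. -/
noncomputable def mincutCert (n : ℕ) (w : EdgeSlot n → ℝ) : ℕ :=
  sInf {k : ℕ | ∃ A : Matrix (Fin k) (EdgeSlot n) ℝ,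
    ∀ w' : EdgeSlot n → ℝ, (∀ e, 0 ≤ w' e) → A.mulVec w = A.mulVec w' →
      minCutVal n w' = minCutVal n w}

/-- The connectivity linear-query certificate complexity. -/
noncomputable def conCert (n : ℕ) (w : EdgeSlot n → ℝ) : ℕ :=
  sInf {k : ℕ | ∃ A : Matrix (Fin k) (EdgeSlot n) ℝ,
    ∀ w' : EdgeSlot n → ℝ, (∀ e, 0 ≤ w' e) → A.mulVec w = A.mulVec w' →
      (0 < minCutVal n w' ↔ 0 < minCutVal n w)}

/-- Row indices of the universal cut-edge incidence matrix: nonempty sets of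
vertices not containing vertex `1` (represented as `0 : Fin n`). -/
abbrev Shore (n : ℕ) [NeZero n] := {S : Finset (Fin n) // S.Nonempty ∧ (0 : Fin n) ∉ S}

/-- The universal cut-edge incidence matrix `M_n`. -/
noncomputable def Mn (n : ℕ) [NeZero n] : Matrix (Shore n) (EdgeSlot n) ℝ :=
  fun S e => if (e.1 ∩ S.1).card = 1 then 1 else 0

/-- `τ`-cut-rank of a graph: the minimum rank of a matrix `X ≤ M_n` (entrywise)
with every entry of `Xw` at least `τ`. -/
noncomputable def cutRank (n : ℕ) [NeZero n] (τ : ℝ) (w : EdgeSlot n → ℝ) : ℕ :=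
  sInf {r : ℕ | ∃ X : Matrix (Shore n) (EdgeSlot n) ℝ,
    (∀ S e, X S e ≤ Mn n S e) ∧ (∀ S, τ ≤ X.mulVec w S) ∧ X.rank = r}

/-- The weight vector of the `n`-cycle with unit weights. -/
noncomputable def cycleWeight (n : ℕ) [NeZero n] : EdgeSlot n → ℝ :=
  fun e => if ∃ i : Fin n, e.1 = {i, i + 1} then 1 else 0

section PolyhedralCone

variable {ι : Type*}

def supportedIn (s : Finset ι) : Submodule ℝ (ι → ℝ) := Submodule.pi (↑s)ᶜ fun _ => ⊥

lemma mem_supportedIn {s : Finset ι} {x : ι → ℝ} : x ∈ supportedIn s ↔ ∀ i ∉ s, x i = 0 := by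
  simp [supportedIn, Submodule.mem_pi]

lemma supportedIn_mono {s t : Finset ι} (h : s ⊆ t) : supportedIn s ≤ supportedIn t :=
  fun _ hx => mem_supportedIn.2 fun i hi => mem_supportedIn.1 hx i fun his => hi (h his)

/-- Carathéodory step: moving from `x` against a direction `g` with a positive entry until the
first coordinate hits zero keeps `x` nonnegative and shrinks its support. -/
lemma exists_sub_smul_mem_supportedIn_erase [DecidableEq ι] {s : Finset ι} {x g : ι → ℝ}
    (hx : x ∈ supportedIn s) (hx₀ : 0 ≤ x) (hg : g ∈ supportedIn s) {i₀ : ι} (hi₀ : 0 < g i₀) :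
    ∃ i ∈ s, ∃ t : ℝ, x - t • g ∈ supportedIn (s.erase i) ∧ 0 ≤ x - t • g := by
  have hpos : ∀ j, 0 < g j → j ∈ s := fun j hj => by
    by_contra hjs; exact hj.ne' (mem_supportedIn.1 hg j hjs)
  obtain ⟨i, hi, hmin⟩ := (s.filter (0 < g ·)).exists_min_image (fun j => x j / g j)
    ⟨i₀, mem_filter.2 ⟨hpos i₀ hi₀, hi₀⟩⟩
  rw [mem_filter] at hi
  refine ⟨i, hi.1, x i / g i, mem_supportedIn.2 fun j hj => ?_, fun j => ?_⟩
  · rcases eq_or_ne j i with rfl | hji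
    · simp [div_mul_cancel₀ _ hi.2.ne']
    · have hjs : j ∉ s := fun hjs => hj (mem_erase.2 ⟨hji, hjs⟩)
      simp [mem_supportedIn.1 hx j hjs, mem_supportedIn.1 hg j hjs]
  · have : x i / g i * g j ≤ x j := by
      rcases lt_or_ge 0 (g j) with hgj | hgj
      · exact (le_div_iff₀ hgj).1 (hmin j (mem_filter.2 ⟨hpos j hgj, hgj⟩))
      · exact (mul_nonpos_of_nonneg_of_nonpos (div_nonneg (hx₀ i) hi.2.le) hgj).trans (hx₀ j)
    simpa using this

variable {E : Type*} [TopologicalSpace E] [AddCommGroup E] [Module ℝ E]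
  [IsTopologicalAddGroup E] [ContinuousSMul ℝ E] [T2Space E]

lemma isClosed_image_nonneg_supportedIn [Fintype ι] [DecidableEq ι] (f : (ι → ℝ) →ₗ[ℝ] E)
    (s : Finset ι) :
    IsClosed (f '' {x | x ∈ supportedIn s ∧ 0 ≤ x}) := by
  induction s using Finset.strongInduction with
  | H s ih =>
  by_cases hinj : ∀ g ∈ supportedIn s, f g = 0 → g = 0
  · have hf : LinearMap.ker (f.domRestrict (supportedIn s)) = ⊥ :=
      LinearMap.ker_eq_bot'.2 fun g hg => Subtype.ext (hinj g g.2 hg)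
    have himage : f '' {x | x ∈ supportedIn s ∧ 0 ≤ x} =
        f.domRestrict (supportedIn s) '' {g | 0 ≤ (g : ι → ℝ)} := by
      ext y
      simp only [Set.mem_image, Set.mem_ofPred_eq, Subtype.exists, LinearMap.domRestrict_apply]
      exact ⟨fun ⟨x, ⟨hx, hx₀⟩, hy⟩ => ⟨x, hx, hx₀, hy⟩,
        fun ⟨x, hx, hx₀, hy⟩ => ⟨x, ⟨hx, hx₀⟩, hy⟩⟩
    rw [himage]
    exact (LinearMap.isClosedEmbedding_of_injective hf).isClosedMap _
      (isClosed_le continuous_const continuous_subtype_val)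
  · push Not at hinj
    obtain ⟨g₀, hg₀, hfg₀, hg₀0⟩ := hinj
    obtain ⟨g, hg, hfg, i₀, hi₀⟩ : ∃ g ∈ supportedIn s, f g = 0 ∧ ∃ i, 0 < g i := by
      obtain ⟨i, hi⟩ := Function.ne_iff.1 hg₀0
      rcases hi.lt_or_gt with hneg | hpos
      · exact ⟨-g₀, neg_mem hg₀, by simp [hfg₀], i, by simpa using hneg⟩
      · exact ⟨g₀, hg₀, hfg₀, i, hpos⟩
    have hunion : f '' {x | x ∈ supportedIn s ∧ 0 ≤ x} =
        ⋃ i ∈ s, f '' {x | x ∈ supportedIn (s.erase i) ∧ 0 ≤ x} := by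
      apply subset_antisymm
      · rintro _ ⟨x, ⟨hx, hx₀⟩, rfl⟩
        obtain ⟨i, hi, t, hxt, hxt₀⟩ := exists_sub_smul_mem_supportedIn_erase hx hx₀ hg hi₀
        exact Set.mem_biUnion hi ⟨x - t • g, ⟨hxt, hxt₀⟩, by simp [hfg]⟩
      · refine Set.iUnion₂_subset fun i _ => Set.image_mono fun x hx =>
          ⟨supportedIn_mono (erase_subset i s) hx.1, hx.2⟩
    rw [hunion]
    exact isClosed_biUnion_finset fun i hi => ih _ (erase_ssubset hi)

theorem isClosed_image_nonneg [Fintype ι] (f : (ι → ℝ) →ₗ[ℝ] E) :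
    IsClosed (f '' {x | 0 ≤ x}) := by
  classical
  simpa [mem_supportedIn] using isClosed_image_nonneg_supportedIn f univ

end PolyhedralCone

theorem Matrix.farkas {m n : Type*} [Fintype m] [Fintype n] (B : Matrix m n ℝ) (b : m → ℝ) :
    (∃ x, 0 ≤ x ∧ B *ᵥ x = b) ∨ ∃ y, 0 ≤ y ᵥ* B ∧ y ⬝ᵥ b < 0 := by
  classical
  refine or_iff_not_imp_left.2 fun hb => ?_
  let C : ProperCone ℝ (m → ℝ) :=
    ⟨(PointedCone.positive ℝ (n → ℝ)).map B.mulVecLin, isClosed_image_nonneg B.mulVecLin⟩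
  obtain ⟨f, hfC, hfb⟩ := C.hyperplane_separation_point hb
  set y : m → ℝ := fun i => f (Pi.single i 1)
  have hf : ∀ z, f z = y ⬝ᵥ z := fun z => by
    conv_lhs => rw [pi_eq_sum_univ' z, map_sum]
    simp [dotProduct, y, mul_comm]
  refine ⟨y, fun j => ?_, by rwa [← hf]⟩
  have := hfC (B *ᵥ Pi.single j 1) ⟨Pi.single j 1, Pi.single_nonneg.2 zero_le_one, rfl⟩
  rwa [hf, dotProduct_mulVec, dotProduct_single, mul_one] at this

theorem Matrix.exists_vecMul_le_of_forall_dotProduct_pos {m n : Type*} [Fintype m] [Fintype n]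
    (A : Matrix m n ℝ) {w : n → ℝ} (hw : 0 ≤ w) (c : n → ℝ)
    (h : ∀ w', 0 ≤ w' → A *ᵥ w' = A *ᵥ w → 0 < c ⬝ᵥ w') :
    ∃ y, y ᵥ* A ≤ c ∧ 0 < y ⬝ᵥ (A *ᵥ w) := by
  -- Farkas for the system `A x = A w`, `c ⬝ᵥ x + s = 0` in the unknowns `x ≥ 0`, `s ≥ 0`.
  rcases (fromBlocks A 0 (replicateRow Unit c) (1 : Matrix Unit Unit ℝ)).farkas
    (Sum.elim (A *ᵥ w) 0) with ⟨x, hx, hxb⟩ | ⟨z, hz, hzb⟩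
  · rw [fromBlocks_mulVec] at hxb
    have hAx : A *ᵥ (x ∘ Sum.inl) = A *ᵥ w := funext fun i => by
      simpa using congrFun hxb (Sum.inl i)
    have hcx : c ⬝ᵥ (x ∘ Sum.inl) + x (Sum.inr ()) = 0 := by
      simpa [replicateRow_mulVec_eq_const] using congrFun hxb (Sum.inr ())
    have hpos : 0 < c ⬝ᵥ (x ∘ Sum.inl) := h _ (fun e => hx (Sum.inl e)) hAx
    have hslack : 0 ≤ x (Sum.inr ()) := hx (Sum.inr ())
    linarith
  · rw [vecMul_fromBlocks] at hz
    set t := z (Sum.inr ())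
    have ht₀ : 0 ≤ t := by simpa using hz (Sum.inr ())
    have hA : ∀ e, 0 ≤ ((z ∘ Sum.inl) ᵥ* A) e + t * c e := fun e => by
      simpa [vecMul, dotProduct] using hz (Sum.inl e)
    have hzb : (z ∘ Sum.inl) ⬝ᵥ (A *ᵥ w) < 0 := by
      simpa [dotProduct, Fintype.sum_sum_type] using hzb
    have ht : 0 < t := by
      refine ht₀.lt_of_ne fun ht0 => hzb.not_ge ?_
      rw [dotProduct_mulVec]
      exact dotProduct_nonneg_of_nonneg (fun e => by simpa [← ht0] using hA e) hw
    refine ⟨(-t⁻¹) • (z ∘ Sum.inl), fun e => ?_, ?_⟩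
    · rw [smul_vecMul, Pi.smul_apply, smul_eq_mul, neg_mul, neg_le, le_inv_mul_iff₀ ht]
      linarith [hA e]
    · rw [smul_dotProduct, smul_eq_mul]
      exact mul_pos_of_neg_of_neg (by simpa using ht) hzb

theorem Matrix.exists_rank_factorization {m n K : Type*} [Field K] [Finite m] [Fintype n]
    (X : Matrix m n K) :
    ∃ (Y : Matrix m (Fin X.rank) K) (A : Matrix (Fin X.rank) n K), X = Y * A := by
  let b := Module.finBasisOfFinrankEq K _ X.rank_eq_finrank_span_row.symm
  refine ⟨of fun i j => b.repr ⟨X i, Submodule.subset_span (Set.mem_range_self i)⟩ j,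
    of fun j => (b j : n → K), ?_⟩
  ext i e
  have hrow := congrArg (fun v : Submodule.span K (Set.range X.row) => (v : n → K) e)
    (b.sum_repr ⟨X i, Submodule.subset_span (Set.mem_range_self i)⟩)
  simp only [Submodule.coe_sum, Submodule.coe_smul, Finset.sum_apply, Pi.smul_apply,
    smul_eq_mul] at hrow
  simp [mul_apply, ← hrow]

theorem Matrix.exists_injective_mulVec (K ι : Type*) [Semiring K] [Fintype ι] [DecidableEq ι] :
    ∃ A : Matrix (Fin (Fintype.card ι)) ι K, Function.Injective A.mulVec := by
  refine ⟨(1 : Matrix ι ι K).submatrix (Fintype.equivFin ι).symm (Equiv.refl ι),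
    fun v v' h => ?_⟩
  simp only [submatrix_mulVec_equiv, one_mulVec] at h
  exact (Fintype.equivFin ι).symm.surjective.injective_comp_right h

theorem Matrix.mulVec_le_mulVec_of_le {m n α : Type*} [Fintype n] [Semiring α] [PartialOrder α]
    [IsOrderedRing α] {X M : Matrix m n α} (h : ∀ i j, X i j ≤ M i j) {w : n → α} (hw : 0 ≤ w) :
    X *ᵥ w ≤ M *ᵥ w :=
  fun i => Finset.sum_le_sum fun j _ => mul_le_mul_of_nonneg_right (h i j) (hw j)

section Cuts

variable {n : ℕ}

lemma cutWeight_compl (w : EdgeSlot n → ℝ) (S : Finset (Fin n)) :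
    cutWeight n w Sᶜ = cutWeight n w S := by
  refine Finset.sum_congr rfl fun e _ => ?_
  have hcard := card_inter_add_card_sdiff e.1 S
  rw [sdiff_eq_inter_compl, e.2] at hcard
  simp only [show (e.1 ∩ Sᶜ).card = 1 ↔ (e.1 ∩ S).card = 1 by omega]

variable [NeZero n]

lemma shore_ne_univ (S : Shore n) : S.1 ≠ univ := fun h => S.2.2 (h ▸ mem_univ 0)

lemma mulVec_Mn (w : EdgeSlot n → ℝ) (S : Shore n) : (Mn n *ᵥ w) S = cutWeight n w S.1 := by
  simp only [mulVec, dotProduct, Mn, cutWeight, ite_mul, one_mul, zero_mul]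

lemma exists_shore_cutWeight_eq (w : EdgeSlot n → ℝ) {S : Finset (Fin n)} (hS : S.Nonempty)
    (hSV : S ≠ univ) : ∃ T : Shore n, cutWeight n w T.1 = cutWeight n w S := by
  by_cases h0 : (0 : Fin n) ∈ S
  · have hSc : Sᶜ.Nonempty := (compl_ne_univ_iff_nonempty Sᶜ).1 (by rwa [compl_compl])
    exact ⟨⟨Sᶜ, hSc, by simp [h0]⟩, cutWeight_compl w S⟩
  · exact ⟨⟨S, hS, h0⟩, rfl⟩

lemma minCutVal_le {w : EdgeSlot n → ℝ} (hw : 0 ≤ w) (S : Shore n) :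
    minCutVal n w ≤ (Mn n *ᵥ w) S := by
  refine csInf_le ⟨0, ?_⟩ ⟨S.1, S.2.1, shore_ne_univ S, (mulVec_Mn w S).symm⟩
  rintro _ ⟨T, -, -, rfl⟩
  exact sum_nonneg fun e _ => by split_ifs; exacts [hw e, le_rfl]

lemma le_minCutVal [Nonempty (Shore n)] {w : EdgeSlot n → ℝ} {τ : ℝ}
    (h : ∀ S : Shore n, τ ≤ (Mn n *ᵥ w) S) : τ ≤ minCutVal n w := by
  obtain ⟨S₀⟩ := ‹Nonempty (Shore n)›
  refine le_csInf ⟨_, S₀.1, S₀.2.1, shore_ne_univ S₀, rfl⟩ ?_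
  rintro _ ⟨S, hS, hSV, rfl⟩
  obtain ⟨T, hT⟩ := exists_shore_cutWeight_eq w hS hSV
  simpa [← hT, mulVec_Mn] using h T

lemma nonempty_shore_of_minCutVal_pos {w : EdgeSlot n → ℝ} (h : 0 < minCutVal n w) :
    Nonempty (Shore n) := by
  by_contra hempty
  have hcuts : {x : ℝ | ∃ S : Finset (Fin n), S.Nonempty ∧ S ≠ univ ∧ cutWeight n w S = x} = ∅ :=
    Set.eq_empty_of_forall_notMem fun _ ⟨S, hS, hSV, _⟩ =>
      hempty ⟨(exists_shore_cutWeight_eq w hS hSV).choose⟩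
  rw [minCutVal, hcuts, Real.sInf_empty] at h
  exact h.false

end Cuts

section CutRank

variable {n : ℕ} [NeZero n] {w : EdgeSlot n → ℝ}

theorem conCert_le_cutRank (hw : 0 ≤ w) {τ : ℝ} (hτ : 0 < τ) (hτle : τ ≤ minCutVal n w) :
    conCert n w ≤ cutRank n τ w := by
  have := nonempty_shore_of_minCutVal_pos (hτ.trans_le hτle)
  obtain ⟨X, hXM, hXw, hXrank⟩ : cutRank n τ w ∈ {r : ℕ | ∃ X : Matrix (Shore n) (EdgeSlot n) ℝ,
      (∀ S e, X S e ≤ Mn n S e) ∧ (∀ S, τ ≤ X.mulVec w S) ∧ X.rank = r} :=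
    Nat.sInf_mem ⟨_, Mn n, fun _ _ => le_rfl, fun S => hτle.trans (minCutVal_le hw S), rfl⟩
  obtain ⟨Y, A, hYA⟩ := X.exists_rank_factorization
  rw [← hXrank]
  refine Nat.sInf_le ⟨A, fun w' hw' hAw => iff_of_true ?_ (hτ.trans_le hτle)⟩
  refine hτ.trans_le (le_minCutVal fun S => ?_)
  calc τ ≤ (X *ᵥ w) S := hXw S
    _ = (X *ᵥ w') S := by rw [hYA, ← mulVec_mulVec, hAw, mulVec_mulVec]
    _ ≤ (Mn n *ᵥ w') S := mulVec_le_mulVec_of_le hXM hw' S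

theorem exists_cutRank_le_conCert (hw : 0 ≤ w) (hconn : 0 < minCutVal n w) :
    ∃ τ, 0 < τ ∧ τ ≤ minCutVal n w ∧ cutRank n τ w ≤ conCert n w := by
  have := nonempty_shore_of_minCutVal_pos hconn
  obtain ⟨A, hA⟩ : conCert n w ∈ {k : ℕ | ∃ A : Matrix (Fin k) (EdgeSlot n) ℝ,
      ∀ w' : EdgeSlot n → ℝ, (∀ e, 0 ≤ w' e) → A.mulVec w = A.mulVec w' →
        (0 < minCutVal n w' ↔ 0 < minCutVal n w)} := by
    classical
    obtain ⟨A, hA⟩ := Matrix.exists_injective_mulVec ℝ (EdgeSlot n)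
    exact Nat.sInf_mem ⟨_, A, fun w' _ h => by rw [hA h]⟩
  have hdual (S : Shore n) : ∃ y, y ᵥ* A ≤ Mn n S ∧ 0 < y ⬝ᵥ (A *ᵥ w) :=
    A.exists_vecMul_le_of_forall_dotProduct_pos hw (Mn n S) fun w' hw' hAw =>
      ((hA w' hw' hAw.symm).2 hconn).trans_le (minCutVal_le hw' S)
  choose y hyM hyw using hdual
  set X := of y * A
  have hXM : ∀ S e, X S e ≤ Mn n S e := hyM
  have hXw (S : Shore n) : 0 < (X *ᵥ w) S := by rw [← mulVec_mulVec]; exact hyw S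
  obtain ⟨S₀, hS₀⟩ := Finite.exists_min fun S => (X *ᵥ w) S
  refine ⟨(X *ᵥ w) S₀, hXw S₀,
    le_minCutVal fun S => (hS₀ S).trans (mulVec_le_mulVec_of_le hXM hw S), ?_⟩
  calc cutRank n _ w ≤ X.rank := Nat.sInf_le ⟨X, hXM, hS₀, rfl⟩
    _ ≤ A.rank := rank_mul_le_right _ _
    _ ≤ conCert n w := (rank_le_card_height A).trans (Fintype.card_fin _).le

end CutRank

/-- For a connected graph `G` (`λ(G) > 0`), `con-cert(G)` equals the infimum over
`0 < τ ≤ λ(G)` of `τ-cut-rank(G)`. -/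
theorem conCert_eq_inf_cutRank (n : ℕ) [NeZero n] (w : EdgeSlot n → ℝ)
    (hw : ∀ e, 0 ≤ w e) (hconn : 0 < minCutVal n w) :
    conCert n w =
      sInf {r : ℕ | ∃ τ : ℝ, 0 < τ ∧ τ ≤ minCutVal n w ∧ cutRank n τ w = r} := by
  apply le_antisymm
  · exact le_csInf ⟨_, _, hconn, le_rfl, rfl⟩ fun _ ⟨τ, hτ, hτle, hr⟩ =>
      hr ▸ conCert_le_cutRank hw hτ hτle
  · obtain ⟨τ, hτ, hτle, hle⟩ := exists_cutRank_le_conCert hw hconn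
    refine (Nat.sInf_le ?_).trans hle
    exact ⟨τ, hτ, hτle, rfl⟩
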